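/- arXiv:2110.03960 — 4 statements merged into one kernel-verified Lean document; each statement's English description precedes it below -/
import Mathlib

section
/- For all b ∈ ℝ^K, the softmax-weighted average of b satisfies (∑_{i=1}^K e^{b_i} b_i) / (∑_{j=1}^K e^{b_j}) ≥ max_{1≤i≤K} b_i − log(K). -/
/-!
With `Z = ∑ j, exp (b j)` and `p = softmax b`, the weighted average equals `log Z - H(p)`, where
`H` is the Shannon entropy. Jensen's inequality for the concave `x ↦ -x log x` gives
`H(p) ≤ log K`, and `log Z ≥ max b` since `Z` dominates each `exp (b i)`.
-/

open Real Finset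

theorem sum_negMulLog_le_card_mul {ι : Type*} (s : Finset ι) {w : ι → ℝ}
    (hw : ∀ i ∈ s, 0 ≤ w i) :
    ∑ i ∈ s, negMulLog (w i) ≤ #s * negMulLog ((∑ i ∈ s, w i) / #s) := by
  rcases s.eq_empty_or_nonempty with rfl | hs
  · simp
  have hcard : (0 : ℝ) < #s := by exact_mod_cast hs.card_pos
  have jensen := concaveOn_negMulLog.le_map_sum (t := s) (w := fun _ ↦ (#s : ℝ)⁻¹) (p := w)
    (fun _ _ ↦ by positivity) (by simp [hcard.ne']) hw
  simp only [smul_eq_mul, ← mul_sum] at jensen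
  rw [div_eq_inv_mul]
  calc ∑ i ∈ s, negMulLog (w i) = #s * ((#s : ℝ)⁻¹ * ∑ i ∈ s, negMulLog (w i)) := by
        field_simp
    _ ≤ _ := by gcongr

theorem le_log_sum_exp {ι : Type*} {s : Finset ι} {i : ι} (hi : i ∈ s) (b : ι → ℝ) :
    b i ≤ log (∑ j ∈ s, exp (b j)) :=
  (le_log_iff_exp_le (sum_pos (fun j _ ↦ exp_pos (b j)) ⟨i, hi⟩)).2
    (single_le_sum (fun j _ ↦ (exp_pos (b j)).le) hi)

theorem sup'_le_log_sum_exp {ι : Type*} {s : Finset ι} (hs : s.Nonempty) (b : ι → ℝ) :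
    s.sup' hs b ≤ log (∑ j ∈ s, exp (b j)) :=
  sup'_le hs b fun _ hi ↦ le_log_sum_exp hi b

theorem log_sum_exp_sub_log_card_le {ι : Type*} (s : Finset ι) (b : ι → ℝ) :
    log (∑ i ∈ s, exp (b i)) - log #s ≤
      (∑ i ∈ s, exp (b i) * b i) / (∑ i ∈ s, exp (b i)) := by
  rcases s.eq_empty_or_nonempty with rfl | hs
  · simp
  set Z := ∑ i ∈ s, exp (b i)
  have hZ : 0 < Z := sum_pos (fun i _ ↦ exp_pos (b i)) hs
  have hcard : (0 : ℝ) < #s := by exact_mod_cast hs.card_pos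
  rw [le_div_iff₀ hZ]
  calc (log Z - log #s) * Z = -(#s * negMulLog (Z / #s)) := by
        rw [negMulLog, log_div hZ.ne' hcard.ne']
        field_simp
    _ ≤ -∑ i ∈ s, negMulLog (exp (b i)) :=
        neg_le_neg (sum_negMulLog_le_card_mul s fun i _ ↦ (exp_pos (b i)).le)
    _ = ∑ i ∈ s, exp (b i) * b i := by simp [negMulLog]

theorem softmax_weighted_average_ge (K : ℕ) (hK : 0 < K) (b : Fin K → ℝ) :
    (∑ i, Real.exp (b i) * b i) / (∑ j, Real.exp (b j)) ≥
      (Finset.univ.sup' (Finset.univ_nonempty_iff.mpr (Fin.pos_iff_nonempty.mp hK)) b)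
        - Real.log K := by
  calc _ ≤ log (∑ j, exp (b j)) - log K := by gcongr; exact sup'_le_log_sum_exp _ b
    _ ≤ _ := by simpa using log_sum_exp_sub_log_card_le univ b
end

section
/- Let A, B be symmetric positive semi-definite d×d real matrices with A − B positive definite (and A positive definite). Then Tr(A^{-1} B) ≤ log(det(A) / det(A − B)). -/
open Matrix Finset
open scoped MatrixOrder

lemma aux_eig_lt_one {n : Type*} [Fintype n] [DecidableEq n] {C : Matrix n n ℝ}
    (hC : C.IsHermitian) (h1C : ((1 : Matrix n n ℝ) - C).PosDef) (i : n) :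
    hC.eigenvalues i < 1 := by
  have hv := hC.mulVec_eigenvectorBasis i
  have hvne : (⇑(hC.eigenvectorBasis i) : n → ℝ) ≠ 0 :=
    by simpa using hC.eigenvectorBasis.orthonormal.ne_zero i
  have hpos := h1C.dotProduct_mulVec_pos hvne
  rw [sub_mulVec, one_mulVec, hv] at hpos
  set v : n → ℝ := ⇑(hC.eigenvectorBasis i) with hvdef
  have hdot : (0:ℝ) ≤ v ⬝ᵥ v := by
    exact Finset.sum_nonneg fun j _ => mul_self_nonneg (v j)
  have hstar : star v = v := by simp
  rw [hstar, dotProduct_sub, dotProduct_smul] at hpos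
  have : v ⬝ᵥ v - hC.eigenvalues i * (v ⬝ᵥ v) > 0 := by simpa [smul_eq_mul] using hpos
  nlinarith

lemma aux_key {n : Type*} [Fintype n] [DecidableEq n] {C : Matrix n n ℝ}
    (hC : C.PosSemidef) (h1C : ((1 : Matrix n n ℝ) - C).PosDef) :
    C.trace ≤ - Real.log ((1 : Matrix n n ℝ) - C).det := by
  set μ := hC.1.eigenvalues with hμ
  have hlt : ∀ i, μ i < 1 := aux_eig_lt_one hC.1 h1C
  have hge : ∀ i, 0 ≤ μ i := hC.eigenvalues_nonneg
  have hUU : star (hC.1.eigenvectorUnitary : Matrix n n ℝ) * (hC.1.eigenvectorUnitary : Matrix n n ℝ) = 1 :=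
    (Matrix.mem_unitaryGroup_iff').mp hC.1.eigenvectorUnitary.2
  have hUU' : (hC.1.eigenvectorUnitary : Matrix n n ℝ) * star (hC.1.eigenvectorUnitary : Matrix n n ℝ) = 1 :=
    (Matrix.mem_unitaryGroup_iff).mp hC.1.eigenvectorUnitary.2
  have hspec := hC.1.spectral_theorem
  rw [Unitary.conjStarAlgAut_apply] at hspec
  have htrace : C.trace = ∑ i, μ i := by
    conv_lhs => rw [hspec]
    rw [trace_mul_cycle, hUU, one_mul, trace_diagonal]
    simp
    rfl
  have hone : (1 : Matrix n n ℝ) - C = (hC.1.eigenvectorUnitary : Matrix n n ℝ) *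
      ((1 : Matrix n n ℝ) - diagonal (RCLike.ofReal ∘ μ)) * star (hC.1.eigenvectorUnitary : Matrix n n ℝ) := by
    rw [mul_sub, sub_mul, mul_one, hUU', ← hspec]
  have hdet : ((1 : Matrix n n ℝ) - C).det = ∏ i, (1 - μ i) := by
    rw [hone, det_mul_right_comm, hUU', one_mul]
    have h2 : (1 : Matrix n n ℝ) - diagonal (RCLike.ofReal ∘ μ) = diagonal (fun i => 1 - μ i) := by
      rw [← diagonal_one, diagonal_sub]
      simp [Function.comp]
    rw [h2, det_diagonal]
  rw [htrace, hdet]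
  calc ∑ i, μ i ≤ ∑ i, -Real.log (1 - μ i) := by
        refine Finset.sum_le_sum fun i _ => ?_
        have := Real.log_le_sub_one_of_pos (x := 1 - μ i) (by linarith [hlt i])
        linarith
    _ = - ∑ i, Real.log (1 - μ i) := by rw [← Finset.sum_neg_distrib]
    _ = - Real.log (∏ i, (1 - μ i)) := by
        rw [Real.log_prod (fun i _ => sub_ne_zero.mpr (hlt i).ne')]

lemma aux_posDef_conj {n : Type*} [Fintype n] [DecidableEq n] {M N : Matrix n n ℝ}
    (hM : M.PosDef) (hN : IsUnit N) : (Nᴴ * M * N).PosDef := by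
  refine posDef_iff_dotProduct_mulVec.mpr ⟨isHermitian_conjTranspose_mul_mul N hM.1, fun x hx => ?_⟩
  have hinj : Function.Injective (N.mulVec) := Matrix.mulVec_injective_iff_isUnit.mpr hN
  have hNx : N *ᵥ x ≠ 0 := (hinj.ne_iff' (mulVec_zero N)).2 hx
  simpa only [star_mulVec, dotProduct_mulVec, vecMul_vecMul] using hM.dotProduct_mulVec_pos hNx

theorem trace_inv_mul_le_log_det_ratio (d : ℕ) (hd : 0 < d)
    (A B : Matrix (Fin d) (Fin d) ℝ)
    (hA : A.PosSemidef) (hB : B.PosSemidef)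
    (hApd : A.PosDef) (hAB : (A - B).PosDef) :
    (A⁻¹ * B).trace ≤ Real.log (A.det / (A - B).det) := by
  set S := CFC.sqrt A with hSdef
  have hS : S.PosSemidef := (CFC.sqrt_nonneg A).posSemidef
  have hSS : S * S = A := CFC.sqrt_mul_sqrt_self A hA.nonneg
  have hdetS : S.det * S.det = A.det := by rw [← det_mul, hSS]
  have hdetSne : S.det ≠ 0 := by
    intro h
    rw [h, mul_zero] at hdetS
    exact hApd.det_pos.ne' hdetS.symm
  have hSinv : S * S⁻¹ = 1 := mul_nonsing_inv S hdetSne.isUnit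
  have hSinv' : S⁻¹ * S = 1 := nonsing_inv_mul S hdetSne.isUnit
  have hSiH : (S⁻¹)ᴴ = S⁻¹ := hS.1.inv
  set C := S⁻¹ * B * S⁻¹ with hC
  have hCps : C.PosSemidef := by
    have := hB.conjTranspose_mul_mul_same S⁻¹
    rwa [hSiH] at this
  have hAinv : A⁻¹ = S⁻¹ * S⁻¹ := by rw [← hSS, Matrix.mul_inv_rev]
  have htr : (A⁻¹ * B).trace = C.trace := by
    rw [hAinv, mul_assoc, trace_mul_comm]
  have hSAS : S⁻¹ * A * S⁻¹ = 1 := by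
    rw [← hSS, ← mul_assoc S⁻¹ S S, hSinv', one_mul, hSinv]
  have hsub : (1 : Matrix (Fin d) (Fin d) ℝ) - C = (S⁻¹)ᴴ * (A - B) * S⁻¹ := by
    rw [hSiH, mul_sub, sub_mul, hSAS, hC]
  have hSiUnit : IsUnit S⁻¹ := (Matrix.isUnit_nonsing_inv_iff).mpr ((isUnit_iff_isUnit_det S).2 hdetSne.isUnit)
  have h1Cpd : ((1 : Matrix (Fin d) (Fin d) ℝ) - C).PosDef := by
    rw [hsub]; exact aux_posDef_conj hAB hSiUnit
  have hABC : A - B = S * ((1 : Matrix (Fin d) (Fin d) ℝ) - C) * S := by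
    rw [hsub, hSiH]
    simp only [← Matrix.mul_assoc]
    rw [hSinv, one_mul, Matrix.mul_assoc, hSinv', mul_one]
  have hdetsub : (A - B).det = A.det * ((1 : Matrix (Fin d) (Fin d) ℝ) - C).det := by
    rw [hABC, det_mul, det_mul, ← hdetS]; ring
  have hdet1C : 0 < ((1 : Matrix (Fin d) (Fin d) ℝ) - C).det := h1Cpd.det_pos
  rw [htr, hdetsub]
  have hratio : A.det / (A.det * ((1 : Matrix (Fin d) (Fin d) ℝ) - C).det)
      = (((1 : Matrix (Fin d) (Fin d) ℝ) - C).det)⁻¹ := by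
    rw [div_mul_eq_div_div, div_self hApd.det_pos.ne', one_div]
  rw [hratio, Real.log_inv]
  exact aux_key hCps h1Cpd
end

section
/- Let C > 0, K ≥ 1, a ∈ [−C, C]^K, b ∈ ℝ^K, and let p be the softmax of b. Let X be the random variable taking value b_i − a_i with probability p_i. Then almost surely X − E[X] ≤ 2C + log(K). -/
open Real Finset

theorem centered_value_le (K : ℕ) (hK : 0 < K) (C : ℝ) (hC : 0 < C)
    (a b : Fin K → ℝ) (ha : ∀ i, |a i| ≤ C)
    (p : Fin K → ℝ) (hp : p = fun i => Real.exp (b i) / ∑ j, Real.exp (b j)) :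
    ∀ i : Fin K, (b i - a i) - (∑ j, p j * (b j - a j)) ≤ 2 * C + Real.log K := by
  intro i
  set S := ∑ j, Real.exp (b j) with hS
  have hSpos : 0 < S := Finset.sum_pos (fun j _ => Real.exp_pos _) ⟨i, Finset.mem_univ i⟩
  have hppos : ∀ j, 0 < p j := by
    intro j; rw [hp]; exact div_pos (Real.exp_pos _) hSpos
  have hpsum : ∑ j, p j = 1 := by
    rw [hp]; simp only [← Finset.sum_div]; exact div_self hSpos.ne'
  have hKpos : (0:ℝ) < K := by exact_mod_cast hK
  -- b j in terms of p j
  have hb : ∀ j, b j = Real.log (p j) + Real.log S := by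
    intro j
    rw [hp]
    simp only
    rw [Real.log_div (Real.exp_pos _).ne' hSpos.ne', Real.log_exp]
    ring
  -- b i ≤ log S
  have hbi : b i ≤ Real.log S := by
    have h : Real.exp (b i) ≤ S := Finset.single_le_sum (fun j _ => (Real.exp_pos (b j)).le)
      (Finset.mem_univ i)
    calc b i = Real.log (Real.exp (b i)) := (Real.log_exp _).symm
      _ ≤ Real.log S := Real.log_le_log (Real.exp_pos _) h
  -- entropy bound pointwise
  have key : ∀ j ∈ Finset.univ, p j * (-(Real.log (p j)) - Real.log K) ≤ (1:ℝ)/K - p j := by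
    intro j _
    have hpj := hppos j
    have h1 : Real.log (1 / ((K:ℝ) * p j)) ≤ 1 / ((K:ℝ) * p j) - 1 :=
      Real.log_le_sub_one_of_pos (by positivity)
    rw [one_div, Real.log_inv, Real.log_mul hKpos.ne' hpj.ne'] at h1
    have h2 := mul_le_mul_of_nonneg_left h1 hpj.le
    have h3 : p j * (((K:ℝ) * p j)⁻¹ - 1) = 1/K - p j := by
      field_simp
    calc p j * (-(Real.log (p j)) - Real.log K)
        = p j * -(Real.log K + Real.log (p j)) := by ring
      _ ≤ p j * (((K:ℝ) * p j)⁻¹ - 1) := h2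
      _ = 1/K - p j := h3
  have hsumkey : ∑ j, p j * (-(Real.log (p j)) - Real.log K) ≤ 0 := by
    calc ∑ j, p j * (-(Real.log (p j)) - Real.log K)
        ≤ ∑ j, ((1:ℝ)/K - p j) := by
          refine Finset.sum_le_sum ?_
          intro j hj
          exact key j hj
      _ = (K:ℝ) * (1/K) - 1 := by
          rw [Finset.sum_sub_distrib, hpsum]
          simp [Finset.card_univ]
      _ = 0 := by field_simp; ring
  have hent : -(∑ j, p j * Real.log (p j)) - Real.log K ≤ 0 := by
    have expand : ∑ j, p j * (-(Real.log (p j)) - Real.log K)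
        = -(∑ j, p j * Real.log (p j)) - Real.log K := by
      have h1 : ∀ j, p j * (-(Real.log (p j)) - Real.log K)
          = -(p j * Real.log (p j)) - p j * Real.log K := fun j => by ring
      simp only [h1]
      rw [Finset.sum_sub_distrib, Finset.sum_neg_distrib, ← Finset.sum_mul, hpsum, one_mul]
    linarith [expand ▸ hsumkey]
  -- sum of p b
  have hpb : ∑ j, p j * b j = (∑ j, p j * Real.log (p j)) + Real.log S := by
    have h1 : ∀ j, p j * b j = p j * Real.log (p j) + p j * Real.log S := by
      intro j; rw [hb j]; ring
    simp only [h1]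
    rw [Finset.sum_add_distrib, ← Finset.sum_mul, hpsum, one_mul]
  -- bound on ∑ p a
  have hpa : ∑ j, p j * a j ≤ C := by
    calc ∑ j, p j * a j ≤ ∑ j, p j * C := by
          refine Finset.sum_le_sum fun j _ => ?_
          exact mul_le_mul_of_nonneg_left ((abs_le.mp (ha j)).2) (hppos j).le
      _ = C := by rw [← Finset.sum_mul, hpsum, one_mul]
  have hai : -C ≤ a i := (abs_le.mp (ha i)).1
  have hsplit : ∑ j, p j * (b j - a j) = (∑ j, p j * b j) - ∑ j, p j * a j := by
    simp only [mul_sub]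
    exact Finset.sum_sub_distrib _ _
  rw [hsplit, hpb]
  linarith
end

section
/- Let C > 0, K ≥ 1, y ∈ {1,…,K}, a ∈ [−C,C]^K, b ∈ ℝ^K. Let ℓ_y(a) = −log(e^{a_y}/∑_j e^{a_j}) be the multiclass logistic loss. Then ℓ_y(a) ≥ ℓ_y(b) + ∇ℓ_y(b)ᵀ(a−b) + (1/(log(K) + 2(C+1))) · (a−b)ᵀ ∇²ℓ_y(b) (a−b). -/
/-!
Let `p = softmax b`, `q = softmax a` and `r i = log (p i / q i)`. The loss minus its linear
approximation at `b` is the Kullback–Leibler divergence `∑ p r`, and since `a - b` is a constant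
minus `r`, the Hessian form is the `p`-variance of `r`, at most `∑ p r²`. Moreover
`r ≤ L := log K + 2C`, and the one-variable inequality `s² eˢ ≤ (L + 2) klFun (eˢ)` for `s ≤ L`,
applied at `s = r i` and weighted by `q i`, gives `∑ p r² ≤ (L + 2) ∑ p r`.
-/

open Real Finset InformationTheory

lemma hasDerivAt_klFun_exp (t : ℝ) : HasDerivAt (fun t => klFun (exp t)) (t * exp t) t := by
  have := (hasDerivAt_klFun (exp_ne_zero t)).comp t (hasDerivAt_exp t)
  rw [log_exp] at this
  exact this

lemma sq_mul_exp_le_mul_klFun_exp {L s : ℝ} (hL : 0 ≤ L) (hs : s ≤ L) :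
    s ^ 2 * exp s ≤ (L + 2) * klFun (exp s) := by
  -- `G` vanishes at `0` and `G' t = t (L - t) eᵗ` has the sign of `t` on `(-∞, L]`.
  set G : ℝ → ℝ := fun t => (L + 2) * klFun (exp t) - t ^ 2 * exp t
  have hG : ∀ t, HasDerivAt G (t * (L - t) * exp t) t := fun t => by
    refine (((hasDerivAt_klFun_exp t).const_mul (L + 2)).sub
      ((hasDerivAt_pow 2 t).mul (hasDerivAt_exp t))).congr_deriv ?_
    push_cast; ring
  have hGd : Differentiable ℝ G := fun t => (hG t).differentiableAt
  have hG0 : G 0 = 0 := by simp [G, klFun_one]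
  suffices 0 ≤ G s by simp only [G] at this; linarith
  rcases le_total s 0 with hs0 | hs0
  · have : AntitoneOn G (Set.Icc s 0) := by
      refine antitoneOn_of_deriv_nonpos (convex_Icc s 0) hGd.continuous.continuousOn
        hGd.differentiableOn fun t ht => ?_
      rw [interior_Icc] at ht
      rw [(hG t).deriv]
      exact mul_nonpos_of_nonpos_of_nonneg
        (mul_nonpos_of_nonpos_of_nonneg ht.2.le (by linarith [ht.2])) (exp_pos t).le
    simpa [hG0] using this ⟨le_rfl, hs0⟩ ⟨hs0, le_rfl⟩ hs0
  · have : MonotoneOn G (Set.Icc 0 s) := by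
      refine monotoneOn_of_deriv_nonneg (convex_Icc 0 s) hGd.continuous.continuousOn
        hGd.differentiableOn fun t ht => ?_
      rw [interior_Icc] at ht
      rw [(hG t).deriv]
      exact mul_nonneg (mul_nonneg ht.1.le (by linarith [ht.2])) (exp_pos t).le
    simpa [hG0] using this ⟨le_rfl, hs0⟩ ⟨hs0, le_rfl⟩ hs0

variable {ι : Type*} [Fintype ι]

lemma sum_mul_log_div_sq_le {p q : ι → ℝ} (hp : ∀ i, 0 < p i) (hq : ∀ i, 0 < q i)
    (hpq : ∑ i, q i ≤ ∑ i, p i) {L : ℝ} (hL : 0 ≤ L) (hpqL : ∀ i, log (p i / q i) ≤ L) :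
    ∑ i, p i * log (p i / q i) ^ 2 ≤ (L + 2) * ∑ i, p i * log (p i / q i) := by
  have hterm : ∀ i, p i * log (p i / q i) ^ 2
      ≤ (L + 2) * (p i * log (p i / q i) + q i - p i) := fun i => by
    have hq0 := (hq i).ne'
    have key := sq_mul_exp_le_mul_klFun_exp hL (hpqL i)
    rw [exp_log (div_pos (hp i) (hq i)), klFun_apply] at key
    set s := log (p i / q i)
    calc p i * s ^ 2 = q i * (s ^ 2 * (p i / q i)) := by field_simp
      _ ≤ q i * ((L + 2) * (p i / q i * s + 1 - p i / q i)) := by gcongr; exact (hq i).le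
      _ = (L + 2) * (p i * s + q i - p i) := by field_simp
  calc ∑ i, p i * log (p i / q i) ^ 2
      ≤ ∑ i, (L + 2) * (p i * log (p i / q i) + q i - p i) := sum_le_sum fun i _ => hterm i
    _ = (L + 2) * (∑ i, p i * log (p i / q i) + (∑ i, q i - ∑ i, p i)) := by
      rw [← mul_sum, sum_sub_distrib, sum_add_distrib]; ring
    _ ≤ (L + 2) * ∑ i, p i * log (p i / q i) := by
      gcongr; linarith

lemma sum_mul_const_sub_sq_sub_sq_le {p x : ι → ℝ} (hp : ∑ i, p i = 1) (c : ℝ) :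
    ∑ i, p i * (c - x i) ^ 2 - (∑ i, p i * (c - x i)) ^ 2 ≤ ∑ i, p i * x i ^ 2 := by
  have h1 : ∑ i, p i * (c - x i) = c - ∑ i, p i * x i := by
    simp only [mul_sub, sum_sub_distrib, ← sum_mul, hp, one_mul]
  have h2 : ∑ i, p i * (c - x i) ^ 2 = c ^ 2 - 2 * c * ∑ i, p i * x i + ∑ i, p i * x i ^ 2 := by
    have hi : ∀ i, p i * (c - x i) ^ 2 = c ^ 2 * p i - 2 * c * (p i * x i) + p i * x i ^ 2 :=
      fun i => by ring
    simp only [hi, sum_add_distrib, sum_sub_distrib, ← mul_sum, hp, mul_one]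
  rw [h1, h2]
  nlinarith [sq_nonneg (∑ i, p i * x i)]

noncomputable def softmax (z : ι → ℝ) (i : ι) : ℝ := exp (z i) / ∑ j, exp (z j)

lemma sum_exp_pos [Nonempty ι] (z : ι → ℝ) : 0 < ∑ j, exp (z j) :=
  sum_pos (fun j _ => exp_pos (z j)) univ_nonempty

lemma softmax_pos [Nonempty ι] (z : ι → ℝ) (i : ι) : 0 < softmax z i :=
  div_pos (exp_pos _) (sum_exp_pos z)

lemma sum_softmax [Nonempty ι] (z : ι → ℝ) : ∑ i, softmax z i = 1 := by
  simp only [softmax, ← sum_div, div_self (sum_exp_pos z).ne']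

lemma log_softmax [Nonempty ι] (z : ι → ℝ) (i : ι) :
    log (softmax z i) = z i - log (∑ j, exp (z j)) := by
  rw [softmax, log_div (exp_ne_zero _) (sum_exp_pos z).ne', log_exp]

lemma log_softmax_nonpos [Nonempty ι] (z : ι → ℝ) (i : ι) : log (softmax z i) ≤ 0 :=
  log_nonpos (softmax_pos z i).le
    (div_le_one_of_le₀ (single_le_sum (fun j _ => (exp_pos (z j)).le) (mem_univ i))
      (sum_exp_pos z).le)

lemma log_card_add_two_mul_nonneg [Nonempty ι] {a : ι → ℝ} {C : ℝ} (ha : ∀ i, |a i| ≤ C) :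
    0 ≤ log (Fintype.card ι) + 2 * C := by
  obtain ⟨i⟩ := ‹Nonempty ι›
  have := (abs_nonneg (a i)).trans (ha i)
  have : 0 ≤ log (Fintype.card ι) := log_nonneg (by exact_mod_cast Fintype.card_pos)
  positivity

lemma log_sum_exp_le [Nonempty ι] {z : ι → ℝ} {C : ℝ} (hz : ∀ i, z i ≤ C) :
    log (∑ j, exp (z j)) ≤ log (Fintype.card ι) + C := by
  calc log (∑ j, exp (z j)) ≤ log (Fintype.card ι * exp C) :=
        log_le_log (sum_exp_pos z)
          ((sum_le_sum fun j _ => exp_le_exp.mpr (hz j)).trans_eq (by simp))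
    _ = log (Fintype.card ι) + C := by
        rw [log_mul (by simp) (exp_ne_zero _), log_exp]

lemma log_softmax_div_softmax [Nonempty ι] (a b : ι → ℝ) (i : ι) :
    log (softmax b i / softmax a i) =
      (log (∑ j, exp (a j)) - log (∑ j, exp (b j))) - (a i - b i) := by
  rw [log_div (softmax_pos b i).ne' (softmax_pos a i).ne', log_softmax, log_softmax]
  ring

lemma log_softmax_div_softmax_le [Nonempty ι] {a : ι → ℝ} {C : ℝ} (ha : ∀ i, |a i| ≤ C)
    (b : ι → ℝ) (i : ι) :
    log (softmax b i / softmax a i) ≤ log (Fintype.card ι) + 2 * C := by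
  rw [log_div (softmax_pos b i).ne' (softmax_pos a i).ne', log_softmax a]
  have := log_sum_exp_le fun j => (abs_le.mp (ha j)).2
  linarith [log_softmax_nonpos b i, (abs_le.mp (ha i)).1]

lemma log_sum_exp_sub_sub_sum_softmax_mul [Nonempty ι] (a b : ι → ℝ) :
    log (∑ j, exp (a j)) - log (∑ j, exp (b j)) - ∑ i, softmax b i * (a i - b i) =
      ∑ i, softmax b i * log (softmax b i / softmax a i) := by
  simp only [log_softmax_div_softmax, mul_sub, sum_sub_distrib, ← sum_mul, sum_softmax, one_mul]

lemma sum_softmax_mul_sq_sub_sq_le [Nonempty ι] {a : ι → ℝ} {C : ℝ} (ha : ∀ i, |a i| ≤ C)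
    (b : ι → ℝ) :
    ∑ i, softmax b i * (a i - b i) ^ 2 - (∑ i, softmax b i * (a i - b i)) ^ 2 ≤
      (log (Fintype.card ι) + 2 * C + 2) *
        (log (∑ j, exp (a j)) - log (∑ j, exp (b j)) - ∑ i, softmax b i * (a i - b i)) := by
  have hab : ∀ i, a i - b i =
      (log (∑ j, exp (a j)) - log (∑ j, exp (b j))) - log (softmax b i / softmax a i) :=
    fun i => by rw [log_softmax_div_softmax]; ring
  calc _ ≤ ∑ i, softmax b i * log (softmax b i / softmax a i) ^ 2 := by
        simp only [hab]
        exact sum_mul_const_sub_sq_sub_sq_le (sum_softmax b) _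
    _ ≤ (log (Fintype.card ι) + 2 * C + 2) * ∑ i, softmax b i * log (softmax b i / softmax a i) :=
        sum_mul_log_div_sq_le (softmax_pos b) (softmax_pos a) (by rw [sum_softmax, sum_softmax])
          (log_card_add_two_mul_nonneg ha) (log_softmax_div_softmax_le ha b)
    _ = _ := by rw [log_sum_exp_sub_sub_sum_softmax_mul]

/-- The gradient of `ℓ y` at `b` is `p - e_y` and its Hessian quadratic form at `b` is
`v ↦ ∑ i, p i * v i ^ 2 - (∑ i, p i * v i) ^ 2`, where `p` is the softmax of `b`. -/
theorem logistic_quadratic_lower_bound_general (K : ℕ) (C : ℝ)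
    (y : Fin K) (a b : Fin K → ℝ) (ha : ∀ i, |a i| ≤ C)
    (ℓ : Fin K → (Fin K → ℝ) → ℝ)
    (hℓ : ∀ y' z, ℓ y' z = - Real.log (Real.exp (z y') / ∑ j, Real.exp (z j)))
    (p : Fin K → ℝ) (hp : p = fun i => Real.exp (b i) / ∑ j, Real.exp (b j)) :
    ℓ y a ≥ ℓ y b
      + (∑ i, (p i - if i = y then 1 else 0) * (a i - b i))
      + (1 / (Real.log K + 2 * (C + 1)))
          * ((∑ i, p i * (a i - b i) ^ 2) - (∑ i, p i * (a i - b i)) ^ 2) := by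
  have : Nonempty (Fin K) := ⟨y⟩
  obtain rfl : p = softmax b := hp
  have hℓ_eq : ∀ z, ℓ y z = log (∑ j, exp (z j)) - z y := fun z => by
    rw [hℓ, ← softmax, log_softmax]; ring
  have hlin : ∑ i, (softmax b i - if i = y then 1 else 0) * (a i - b i) =
      ∑ i, softmax b i * (a i - b i) - (a y - b y) := by
    simp [sub_mul, sum_sub_distrib]
  have hquad := sum_softmax_mul_sq_sub_sq_le ha b
  rw [Fintype.card_fin] at hquad
  have hpos : 0 < log K + 2 * C + 2 := by
    linarith [Fintype.card_fin K ▸ log_card_add_two_mul_nonneg ha]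
  rw [ge_iff_le, hℓ_eq, hℓ_eq, hlin, show log K + 2 * (C + 1) = log K + 2 * C + 2 by ring,
    one_div_mul_eq_div]
  have := (div_le_iff₀' hpos).mpr hquad
  linarith

/-- Quadratic lower bound for the multiclass logistic loss (Lemma 1 of the paper).
Here `ℓ y a = - a y + log (∑ j, exp (a j))`, its gradient at `b` is `p - e_y`
with `p` the softmax of `b`, and the Hessian quadratic form at `b` applied to `a - b`
is `∑ i, p i * (a i - b i)^2 - (∑ i, p i * (a i - b i))^2`. -/
theorem logistic_quadratic_lower_bound (K : ℕ) (hK : 0 < K) (C : ℝ) (hC : 0 < C)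
    (y : Fin K) (a b : Fin K → ℝ) (ha : ∀ i, |a i| ≤ C)
    (ℓ : Fin K → (Fin K → ℝ) → ℝ)
    (hℓ : ∀ y' z, ℓ y' z = - Real.log (Real.exp (z y') / ∑ j, Real.exp (z j)))
    (p : Fin K → ℝ) (hp : p = fun i => Real.exp (b i) / ∑ j, Real.exp (b j)) :
    ℓ y a ≥ ℓ y b
      + (∑ i, (p i - if i = y then 1 else 0) * (a i - b i))
      + (1 / (Real.log K + 2 * (C + 1)))
          * ((∑ i, p i * (a i - b i) ^ 2) - (∑ i, p i * (a i - b i)) ^ 2) :=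
  logistic_quadratic_lower_bound_general K C y a b ha ℓ hℓ p hp
end
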